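/- arXiv:1805.02064 — 2 statements merged into one kernel-verified Lean document; each statement's English description precedes it below -/
import Mathlib

section
/- For each positive definite integral binary quadratic form Q of negative discriminant, the order of the stabilizer of Q in PSL_2(Z) is 3 if Q is SL_2(Z)-equivalent to a constant multiple of X^2+XY+Y^2, is 2 if Q is SL_2(Z)-equivalent to a constant multiple of X^2+Y^2, and is 1 otherwise. -/
/-!
Write `γ = [[p, q], [r, s]]`. If `γ ≠ ±1` fixes the positive definite form `Q = [a, b, c]`, its
entries satisfy `a (s - p) = b r` and `a q = -c r`, so `r ≠ 0` and `Q` is proportional to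
`[r, s - p, -q]`, a form of discriminant `(p + s)² - 4`. These relations also give
`a² (p + s)² - (b² - 4ac) r² = 4a²`, so a negative discriminant forces `(p + s)² < 4`: the
proportional form has discriminant `-3` or `-4`, and reduction theory makes it equivalent to
`X² + XY + Y²` or `X² + Y²`. Thus every other form has stabilizer `{±1}`. The automorphs of the two
special forms are `±1, ±ST, ±(ST)²` and `±1, ±S`, and a scaled equivalence conjugates stabilizers.
-/

/-- `SL(2,ℤ)`. -/
abbrev SL2 := Matrix.SpecialLinearGroup (Fin 2) ℤ

/-- The Gram matrix `[[2a, b], [b, 2c]]` of the binary quadratic form `aX² + bXY + cY²`. -/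
def gram (a b c : ℤ) : Matrix (Fin 2) (Fin 2) ℤ := !![2*a, b; b, 2*c]

/-- The stabilizer of the form with Gram matrix `gram a b c` under the right action
`Q ↦ Q∘γ`, i.e. `M ↦ γᵀ M γ`, as a subset of `SL(2,ℤ)`. -/
def stabSet (a b c : ℤ) : Set SL2 :=
  {γ : SL2 | (Matrix.transpose (γ : Matrix (Fin 2) (Fin 2) ℤ)) * gram a b c * (γ : Matrix (Fin 2) (Fin 2) ℤ)
      = gram a b c}

/-- The image of the stabilizer in `PSL(2,ℤ) = SL(2,ℤ)/center`; since the center `{±I}`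
acts trivially on forms, this is the stabilizer of the form in `PSL(2,ℤ)`. -/
def stabPSL (a b c : ℤ) : Set (SL2 ⧸ Subgroup.center SL2) :=
  (fun γ => (QuotientGroup.mk γ : SL2 ⧸ Subgroup.center SL2)) '' stabSet a b c

/-- `Q` is `SL(2,ℤ)`-equivalent to a constant multiple of the form `a₀X² + b₀XY + c₀Y²`. -/
def EquivToMultOf (a b c a₀ b₀ c₀ : ℤ) : Prop :=
  ∃ γ : SL2, ∃ m : ℤ,
    (Matrix.transpose (γ : Matrix (Fin 2) (Fin 2) ℤ)) * gram a b c * (γ : Matrix (Fin 2) (Fin 2) ℤ)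
      = m • gram a₀ b₀ c₀

open scoped Matrix
open Matrix.SpecialLinearGroup ModularGroup

section Congruence

variable {n R : Type*} [Fintype n] [CommRing R]

theorem Matrix.transpose_mul_mul_mul (A B M : Matrix n n R) :
    (A * B)ᵀ * M * (A * B) = Bᵀ * (Aᵀ * M * A) * B := by
  simp only [Matrix.transpose_mul, Matrix.mul_assoc]

namespace Matrix.SpecialLinearGroup

variable [DecidableEq n]

theorem transpose_mul_mul_injective (γ : SpecialLinearGroup n R) :
    Function.Injective fun M : Matrix n n R => (γ : Matrix n n R)ᵀ * M * γ := by
  intro M N h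
  have hγ : IsUnit (γ : Matrix n n R) := (isUnit_iff_isUnit_det _).2 (by simp)
  have hγt : IsUnit (γ : Matrix n n R)ᵀ := (isUnit_iff_isUnit_det _).2 (by simp)
  exact hγt.mul_left_cancel (hγ.mul_right_cancel h)

theorem det_transpose_mul_mul (γ : SpecialLinearGroup n R) (M : Matrix n n R) :
    ((γ : Matrix n n R)ᵀ * M * γ).det = M.det := by
  simp [Matrix.det_mul]

theorem transpose_conj_mul_mul_conj_eq_iff [IsDomain R] {M N : Matrix n n R} {m : R} (hm : m ≠ 0)
    {γ : SpecialLinearGroup n R} (hγ : (γ : Matrix n n R)ᵀ * M * γ = m • N)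
    (δ : SpecialLinearGroup n R) :
    (↑(γ * δ * γ⁻¹) : Matrix n n R)ᵀ * M * (↑(γ * δ * γ⁻¹) : Matrix n n R) = M ↔
      (δ : Matrix n n R)ᵀ * N * δ = N := by
  rw [← (transpose_mul_mul_injective γ).eq_iff]
  simp only [← transpose_mul_mul_mul, ← coe_mul, inv_mul_cancel_right]
  rw [coe_mul, transpose_mul_mul_mul, hγ, Matrix.mul_smul, Matrix.smul_mul,
    (smul_right_injective _ hm).eq_iff]

end Matrix.SpecialLinearGroup

end Congruence

section Gram

theorem gram_inj {a b c a' b' c' : ℤ} : gram a b c = gram a' b' c' ↔ a = a' ∧ b = b' ∧ c = c' := by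
  refine ⟨fun h => ?_, by rintro ⟨rfl, rfl, rfl⟩; rfl⟩
  have h00 := congrFun₂ h 0 0
  have h01 := congrFun₂ h 0 1
  have h11 := congrFun₂ h 1 1
  simp only [gram, Fin.isValue, Matrix.of_apply, Matrix.cons_val', Matrix.cons_val_zero,
    Matrix.cons_val_fin_one, Matrix.cons_val_one, mul_eq_mul_left_iff, OfNat.ofNat_ne_zero,
    or_false] at h00 h01 h11
  exact ⟨h00, h01, h11⟩

theorem smul_gram (m a b c : ℤ) : m • gram a b c = gram (m * a) (m * b) (m * c) := by
  simp [gram, mul_left_comm m 2]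

theorem det_gram (a b c : ℤ) : (gram a b c).det = 4 * a * c - b ^ 2 := by
  rw [gram, Matrix.det_fin_two_of]; ring

theorem transpose_mul_gram_mul (a b c : ℤ) (γ : SL2) :
    (γ : Matrix (Fin 2) (Fin 2) ℤ)ᵀ * gram a b c * γ =
      gram (a * γ 0 0 ^ 2 + b * γ 0 0 * γ 1 0 + c * γ 1 0 ^ 2)
        (2 * a * γ 0 0 * γ 0 1 + b * (γ 0 0 * γ 1 1 + γ 0 1 * γ 1 0) + 2 * c * γ 1 0 * γ 1 1)
        (a * γ 0 1 ^ 2 + b * γ 0 1 * γ 1 1 + c * γ 1 1 ^ 2) := by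
  ext i j
  fin_cases i <;> fin_cases j <;>
    simp only [gram, Fin.zero_eta, Fin.mk_one, Fin.isValue, Matrix.mul_apply,
      Matrix.transpose_apply, Matrix.of_apply, Matrix.cons_val', Matrix.cons_val_fin_one,
      Fin.sum_univ_two, Matrix.cons_val_zero, Matrix.cons_val_one] <;>
    ring

theorem transpose_mul_gram_mul_S (a b c : ℤ) :
    (S : Matrix (Fin 2) (Fin 2) ℤ)ᵀ * gram a b c * S = gram c (-b) a := by
  rw [transpose_mul_gram_mul]; simp

theorem transpose_mul_gram_mul_T_zpow (a b c k : ℤ) :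
    (↑(T ^ k) : Matrix (Fin 2) (Fin 2) ℤ)ᵀ * gram a b c * (↑(T ^ k) : Matrix (Fin 2) (Fin 2) ℤ) =
      gram a (b + 2 * a * k) (a * k ^ 2 + b * k + c) := by
  rw [transpose_mul_gram_mul]
  simp only [coe_T_zpow, Matrix.of_apply, Matrix.cons_val', Matrix.cons_val_zero,
    Matrix.cons_val_fin_one, Matrix.cons_val_one]
  congr 1 <;> ring

theorem SL2.det_fin_two (γ : SL2) : γ 0 0 * γ 1 1 - γ 0 1 * γ 1 0 = 1 := by
  have := γ.det_coe; rwa [Matrix.det_fin_two] at this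

end Gram

section Stabilizer

variable {a b c : ℤ} {γ δ : SL2}

theorem one_mem_stabSet : (1 : SL2) ∈ stabSet a b c := by
  simp [stabSet]

theorem neg_mem_stabSet (h : γ ∈ stabSet a b c) : -γ ∈ stabSet a b c := by
  simpa [stabSet] using h

theorem gram_eq_of_mem_stabSet (h : γ ∈ stabSet a b c) :
    a * γ 0 0 ^ 2 + b * γ 0 0 * γ 1 0 + c * γ 1 0 ^ 2 = a ∧
      2 * a * γ 0 0 * γ 0 1 + b * (γ 0 0 * γ 1 1 + γ 0 1 * γ 1 0) + 2 * c * γ 1 0 * γ 1 1 = b ∧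
      a * γ 0 1 ^ 2 + b * γ 0 1 * γ 1 1 + c * γ 1 1 ^ 2 = c :=
  gram_inj.1 ((transpose_mul_gram_mul a b c γ).symm.trans h)

theorem mem_stabSet_linear (h : γ ∈ stabSet a b c) :
    a * γ 1 1 = a * γ 0 0 + b * γ 1 0 ∧ a * γ 0 1 = -(c * γ 1 0) := by
  obtain ⟨h₁, h₂, h₃⟩ := gram_eq_of_mem_stabSet h
  have hdet := SL2.det_fin_two γ
  constructor <;> refine mul_left_cancel₀ two_ne_zero ?_
  · linear_combination -(2 * γ 1 1) * h₁ + γ 1 0 * h₂ + (2 * a * γ 0 0 + b * γ 1 0) * hdet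
  · linear_combination γ 1 1 * h₂ - 2 * γ 1 0 * h₃ - (2 * a * γ 0 1 + b * γ 1 1) * hdet

theorem eq_of_mem_stabSet (ha : a ≠ 0) (hγ : γ ∈ stabSet a b c) (hδ : δ ∈ stabSet a b c)
    (h₀ : γ 0 0 = δ 0 0) (h₁ : γ 1 0 = δ 1 0) : γ = δ := by
  obtain ⟨hγ₁, hγ₂⟩ := mem_stabSet_linear hγ
  obtain ⟨hδ₁, hδ₂⟩ := mem_stabSet_linear hδ
  ext i j
  fin_cases i <;> fin_cases j
  · exact h₀
  · exact mul_left_cancel₀ ha (by simp [hγ₂, hδ₂, h₁])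
  · exact h₁
  · exact mul_left_cancel₀ ha (by simp [hγ₁, hδ₁, h₀, h₁])

theorem eq_one_or_eq_neg_one_of_mem_stabSet (ha : a ≠ 0) (hγ : γ ∈ stabSet a b c)
    (hr : γ 1 0 = 0) : γ = 1 ∨ γ = -1 := by
  have hdet := SL2.det_fin_two γ
  have hs : γ 1 1 = γ 0 0 := mul_left_cancel₀ ha (by simpa [hr] using (mem_stabSet_linear hγ).1)
  rw [hr, hs, mul_zero, sub_zero, mul_self_eq_one_iff] at hdet
  refine hdet.imp (fun h => ?_) (fun h => ?_)
  · exact eq_of_mem_stabSet ha hγ one_mem_stabSet (by simp [h]) (by simp [hr])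
  · exact eq_of_mem_stabSet ha hγ (neg_mem_stabSet one_mem_stabSet) (by simp [h]) (by simp [hr])

end Stabilizer

section PSL

theorem SL2.mem_center_iff {γ : SL2} : γ ∈ Subgroup.center SL2 ↔ γ = 1 ∨ γ = -1 := by
  rw [Matrix.SpecialLinearGroup.mem_center_iff, Fintype.card_fin]
  constructor
  · rintro ⟨r, hr, hγ⟩
    rcases sq_eq_one_iff.1 hr with rfl | rfl
    · exact Or.inl (Subtype.ext (by simp [← hγ]))
    · exact Or.inr (Subtype.ext (by simp [← hγ]))
  · rintro (rfl | rfl)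
    · exact ⟨1, by simp, by simp⟩
    · exact ⟨-1, by norm_num, by ext i j; fin_cases i <;> fin_cases j <;> simp⟩

theorem SL2.mk_eq_mk_iff {γ δ : SL2} :
    (γ : SL2 ⧸ Subgroup.center SL2) = δ ↔ γ = δ ∨ γ = -δ := by
  rw [QuotientGroup.eq, SL2.mem_center_iff, inv_mul_eq_one, inv_mul_eq_iff_eq_mul, mul_neg_one,
    @eq_comm _ δ, neg_eq_iff_eq_neg]

theorem SL2.mk_neg (γ : SL2) : ((-γ : SL2) : SL2 ⧸ Subgroup.center SL2) = γ :=
  SL2.mk_eq_mk_iff.2 (Or.inr rfl)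

end PSL

section Invariance

variable {a b c a₀ b₀ c₀ : ℤ}

theorem stabSet_eq_image_conj {γ : SL2} {m : ℤ} (hm : m ≠ 0)
    (hγ : (γ : Matrix (Fin 2) (Fin 2) ℤ)ᵀ * gram a b c * γ = m • gram a₀ b₀ c₀) :
    stabSet a₀ b₀ c₀ = MulAut.conj γ⁻¹ '' stabSet a b c := by
  ext δ
  constructor
  · intro h
    exact ⟨γ * δ * γ⁻¹, (transpose_conj_mul_mul_conj_eq_iff hm hγ δ).2 h, by simp [mul_assoc]⟩
  · rintro ⟨δ, hδ, rfl⟩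
    have hconj : γ * MulAut.conj γ⁻¹ δ * γ⁻¹ = δ := by simp [mul_assoc]
    rw [← hconj] at hδ
    exact (transpose_conj_mul_mul_conj_eq_iff hm hγ _).1 hδ

theorem card_stabPSL_eq_of_equivToMultOf (hD : b ^ 2 - 4 * a * c ≠ 0)
    (h : EquivToMultOf a b c a₀ b₀ c₀) :
    Nat.card (stabPSL a₀ b₀ c₀) = Nat.card (stabPSL a b c) := by
  obtain ⟨γ, m, hγ⟩ := h
  have hm : m ≠ 0 := by
    rintro rfl
    have := congrArg Matrix.det hγ
    rw [det_transpose_mul_mul, zero_smul, Matrix.det_zero, det_gram] at this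
    omega
  have hconj : stabPSL a₀ b₀ c₀ =
      MulAut.conj (γ : SL2 ⧸ Subgroup.center SL2)⁻¹ '' stabPSL a b c := by
    rw [stabPSL, stabPSL, stabSet_eq_image_conj hm hγ, Set.image_image, Set.image_image]
    rfl
  rw [hconj, Nat.card_image_of_injective (MulAut.conj _).injective]

end Invariance

section SpecialForms

theorem stabSet_one_zero_one : stabSet 1 0 1 = {1, -1, S, -S} := by
  have hS : S ∈ stabSet 1 0 1 := by
    show _ = _
    decide
  have hsub : ({1, -1, S, -S} : Set SL2) ⊆ stabSet 1 0 1 := by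
    simp only [Set.insert_subset_iff, Set.singleton_subset_iff]
    exact ⟨one_mem_stabSet, neg_mem_stabSet one_mem_stabSet, hS, neg_mem_stabSet hS⟩
  refine Set.Subset.antisymm (fun γ hγ => ?_) hsub
  obtain ⟨hQ, -, -⟩ := gram_eq_of_mem_stabSet hγ
  obtain ⟨δ, hδ, h₀, h₁⟩ :
      ∃ δ ∈ ({1, -1, S, -S} : Set SL2), γ 0 0 = δ 0 0 ∧ γ 1 0 = δ 1 0 := by
    generalize γ 0 0 = p, γ 1 0 = r at hQ ⊢
    have : -1 ≤ p ∧ p ≤ 1 ∧ -1 ≤ r ∧ r ≤ 1 := by refine ⟨?_, ?_, ?_, ?_⟩ <;> nlinarith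
    obtain ⟨_, _, _, _⟩ := this
    interval_cases p <;> interval_cases r <;> simp_all
  rwa [eq_of_mem_stabSet one_ne_zero hγ (hsub hδ) h₀ h₁]

theorem stabPSL_one_zero_one : stabPSL 1 0 1 = {1, (S : SL2 ⧸ Subgroup.center SL2)} := by
  rw [stabPSL, stabSet_one_zero_one]
  simp [Set.image_insert_eq, SL2.mk_neg]

theorem card_stabPSL_one_zero_one : Nat.card (stabPSL 1 0 1) = 2 := by
  rw [stabPSL_one_zero_one, Nat.card_coe_set_eq, Set.ncard_pair]
  rw [← QuotientGroup.mk_one, Ne, SL2.mk_eq_mk_iff]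
  decide

theorem stabSet_one_one_one :
    stabSet 1 1 1 = {1, -1, S * T, -(S * T), (S * T) ^ 2, -(S * T) ^ 2} := by
  have hST : S * T ∈ stabSet 1 1 1 := by
    show _ = _
    decide
  have hST₂ : (S * T) ^ 2 ∈ stabSet 1 1 1 := by
    show _ = _
    decide
  have hsub :
      ({1, -1, S * T, -(S * T), (S * T) ^ 2, -(S * T) ^ 2} : Set SL2) ⊆ stabSet 1 1 1 := by
    simp only [Set.insert_subset_iff, Set.singleton_subset_iff]
    exact ⟨one_mem_stabSet, neg_mem_stabSet one_mem_stabSet, hST, neg_mem_stabSet hST, hST₂,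
      neg_mem_stabSet hST₂⟩
  refine Set.Subset.antisymm (fun γ hγ => ?_) hsub
  obtain ⟨hQ, -, -⟩ := gram_eq_of_mem_stabSet hγ
  obtain ⟨δ, hδ, h₀, h₁⟩ : ∃ δ ∈ ({1, -1, S * T, -(S * T), (S * T) ^ 2, -(S * T) ^ 2} : Set SL2),
      γ 0 0 = δ 0 0 ∧ γ 1 0 = δ 1 0 := by
    generalize γ 0 0 = p, γ 1 0 = r at hQ ⊢
    have : -1 ≤ p ∧ p ≤ 1 ∧ -1 ≤ r ∧ r ≤ 1 := by
      refine ⟨?_, ?_, ?_, ?_⟩ <;> nlinarith [sq_nonneg (2 * p + r), sq_nonneg (p + 2 * r)]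
    obtain ⟨_, _, _, _⟩ := this
    interval_cases p <;> interval_cases r <;> simp_all <;> decide
  rwa [eq_of_mem_stabSet one_ne_zero hγ (hsub hδ) h₀ h₁]

theorem stabPSL_one_one_one :
    stabPSL 1 1 1 = {1, ((S * T : SL2) : SL2 ⧸ Subgroup.center SL2),
      (((S * T) ^ 2 : SL2) : SL2 ⧸ Subgroup.center SL2)} := by
  rw [stabPSL, stabSet_one_one_one]
  simp [Set.image_insert_eq, SL2.mk_neg]

theorem card_stabPSL_one_one_one : Nat.card (stabPSL 1 1 1) = 3 := by
  rw [stabPSL_one_one_one, Nat.card_coe_set_eq, Set.ncard_insert_of_notMem, Set.ncard_pair]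
  · rw [Ne, SL2.mk_eq_mk_iff]
    decide
  · rw [← QuotientGroup.mk_one, Set.mem_insert_iff, Set.mem_singleton_iff, SL2.mk_eq_mk_iff,
      SL2.mk_eq_mk_iff]
    decide

end SpecialForms

section Reduction

theorem exists_reduced (a b c : ℤ) (ha : 0 < a) (hD : b ^ 2 < 4 * a * c) :
    ∃ (δ : SL2) (a' b' c' : ℤ),
      (δ : Matrix (Fin 2) (Fin 2) ℤ)ᵀ * gram a b c * δ = gram a' b' c' ∧ |b'| ≤ a' ∧ a' ≤ c' := by
  obtain ⟨k, hk⟩ : ∃ k : ℤ, |b + 2 * a * k| ≤ a := by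
    have h2a : 0 < 2 * a := by positivity
    refine ⟨(a - b) / (2 * a), abs_le.2 ⟨?_, ?_⟩⟩ <;>
      linarith [Int.mul_ediv_add_emod (a - b) (2 * a), Int.emod_nonneg (a - b) h2a.ne',
        Int.emod_lt_of_pos (a - b) h2a]
  have hT := transpose_mul_gram_mul_T_zpow a b c k
  set b₁ := b + 2 * a * k
  set c₁ := a * k ^ 2 + b * k + c
  by_cases hac : a ≤ c₁
  · exact ⟨T ^ k, a, b₁, c₁, hT, hk, hac⟩
  have hD₁ : (-b₁) ^ 2 < 4 * c₁ * a := by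
    simp only [b₁, c₁]
    linear_combination hD
  have hc₁ : 0 < c₁ := by nlinarith [sq_nonneg b₁]
  obtain ⟨δ, a', b', c', hδ, hred⟩ := exists_reduced c₁ (-b₁) a hc₁ hD₁
  refine ⟨T ^ k * S * δ, a', b', c', ?_, hred⟩
  rw [coe_mul, coe_mul, Matrix.transpose_mul_mul_mul, Matrix.transpose_mul_mul_mul, hT,
    transpose_mul_gram_mul_S, hδ]
termination_by a.toNat
decreasing_by omega

theorem exists_transform_eq_gram_one {a b c x : ℤ} (hx : x = 0 ∨ x = 1) (ha : 0 < a)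
    (hD : b ^ 2 - 4 * a * c = x ^ 2 - 4) :
    ∃ δ : SL2, (δ : Matrix (Fin 2) (Fin 2) ℤ)ᵀ * gram a b c * δ = gram 1 x 1 := by
  obtain ⟨δ, a', b', c', hδ, hb, hac⟩ :=
    exists_reduced a b c ha (by rcases hx with rfl | rfl <;> linarith)
  have hD' : b' ^ 2 - 4 * a' * c' = x ^ 2 - 4 := by
    have := congrArg Matrix.det hδ
    rw [det_transpose_mul_mul, det_gram, det_gram] at this
    linarith
  have ha' : a' = 1 := by
    have hb2 : b' ^ 2 ≤ a' ^ 2 := sq_le_sq' (abs_le.1 hb).1 (abs_le.1 hb).2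
    rcases hx with rfl | rfl <;> nlinarith [abs_nonneg b']
  subst ha'
  rw [abs_le] at hb
  obtain ⟨rfl, rfl⟩ | ⟨rfl, rfl, rfl⟩ : b' = x ∧ c' = 1 ∨ b' = -1 ∧ x = 1 ∧ c' = 1 := by
    obtain ⟨hb₁, hb₂⟩ := hb
    interval_cases b' <;> rcases hx with rfl | rfl <;> omega
  · exact ⟨δ, hδ⟩
  · refine ⟨δ * T, ?_⟩
    rw [coe_mul, Matrix.transpose_mul_mul_mul, hδ]
    decide

end Reduction

section Automorphs

variable {a b c : ℤ}

theorem equivToMultOf_of_smul_eq {e k A B C x : ℤ} (he : e ≠ 0)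
    (hF : e • gram a b c = k • gram A B C) (δ : SL2)
    (hδ : (δ : Matrix (Fin 2) (Fin 2) ℤ)ᵀ * gram A B C * δ = gram 1 x 1) :
    EquivToMultOf a b c 1 x 1 := by
  obtain ⟨a', b', c', h'⟩ : ∃ a' b' c' : ℤ,
      (δ : Matrix (Fin 2) (Fin 2) ℤ)ᵀ * gram a b c * δ = gram a' b' c' :=
    ⟨_, _, _, transpose_mul_gram_mul a b c δ⟩
  refine ⟨δ, a', ?_⟩
  have hscaled : e • gram a' b' c' = k • gram 1 x 1 := by
    rw [← h', ← hδ, ← Matrix.smul_mul, ← Matrix.mul_smul, hF, Matrix.mul_smul, Matrix.smul_mul]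
  rw [smul_gram, smul_gram, gram_inj] at hscaled
  obtain ⟨h₁, h₂, h₃⟩ := hscaled
  rw [h', smul_gram, gram_inj]
  refine ⟨(mul_one a').symm, mul_left_cancel₀ he ?_, mul_left_cancel₀ he ?_⟩
  · linear_combination h₂ - x * h₁
  · linear_combination h₃ - h₁

theorem equivToMultOf_of_mem_stabSet (ha : 0 < a) (hD : b ^ 2 - 4 * a * c < 0) {γ : SL2}
    (hγ : γ ∈ stabSet a b c) (h₁ : γ ≠ 1) (h₂ : γ ≠ -1) :
    EquivToMultOf a b c 1 1 1 ∨ EquivToMultOf a b c 1 0 1 := by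
  wlog hr : 0 < γ 1 0 generalizing γ
  · have hr₀ : γ 1 0 ≠ 0 := fun h => (eq_one_or_eq_neg_one_of_mem_stabSet ha.ne' hγ h).elim h₁ h₂
    refine this (neg_mem_stabSet hγ) (by rwa [Ne, neg_eq_iff_eq_neg]) (by rwa [Ne, neg_inj]) ?_
    simp only [coe_neg, Matrix.neg_apply]
    omega
  obtain ⟨hs, hq⟩ := mem_stabSet_linear hγ
  have hdet := SL2.det_fin_two γ
  have key : a ^ 2 * (γ 0 0 + γ 1 1) ^ 2 - (b ^ 2 - 4 * a * c) * γ 1 0 ^ 2 = 4 * a ^ 2 := by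
    linear_combination (a * γ 1 1 - a * γ 0 0 + b * γ 1 0) * hs + 4 * a ^ 2 * hdet +
      4 * a * γ 1 0 * hq
  have ht : |γ 0 0 + γ 1 1| = 0 ∨ |γ 0 0 + γ 1 1| = 1 := by
    have : |γ 0 0 + γ 1 1| < 2 := abs_lt_of_sq_lt_sq (by nlinarith) zero_le_two
    have := abs_nonneg (γ 0 0 + γ 1 1)
    omega
  have hF : γ 1 0 • gram a b c = a • gram (γ 1 0) (γ 1 1 - γ 0 0) (-γ 0 1) := by
    rw [smul_gram, smul_gram, gram_inj]
    exact ⟨mul_comm _ _, by linear_combination -hs, by linear_combination hq⟩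
  have hFD : (γ 1 1 - γ 0 0) ^ 2 - 4 * γ 1 0 * (-γ 0 1) = |γ 0 0 + γ 1 1| ^ 2 - 4 := by
    rw [sq_abs]
    linear_combination -4 * hdet
  obtain ⟨δ, hδ⟩ := exists_transform_eq_gram_one ht hr hFD
  have := equivToMultOf_of_smul_eq hr.ne' hF δ hδ
  rcases ht with h | h <;> rw [h] at this
  exacts [Or.inr this, Or.inl this]

end Automorphs

theorem stmt0 (a b c : ℤ) (ha : 0 < a) (hd : b ^ 2 - 4 * a * c < 0) :
    (EquivToMultOf a b c 1 1 1 → Nat.card (stabPSL a b c) = 3) ∧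
    (EquivToMultOf a b c 1 0 1 → Nat.card (stabPSL a b c) = 2) ∧
    (¬ EquivToMultOf a b c 1 1 1 ∧ ¬ EquivToMultOf a b c 1 0 1 →
      Nat.card (stabPSL a b c) = 1) := by
  refine ⟨fun h => (card_stabPSL_eq_of_equivToMultOf hd.ne h).symm.trans card_stabPSL_one_one_one,
    fun h => (card_stabPSL_eq_of_equivToMultOf hd.ne h).symm.trans card_stabPSL_one_zero_one,
    fun ⟨h₁, h₂⟩ => ?_⟩
  suffices stabPSL a b c = {1} by rw [this, Nat.card_unique]
  refine Set.eq_singleton_iff_unique_mem.2 ⟨⟨1, one_mem_stabSet, rfl⟩, ?_⟩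
  rintro _ ⟨γ, hγ, rfl⟩
  by_contra hne
  rw [← QuotientGroup.mk_one, SL2.mk_eq_mk_iff, not_or] at hne
  exact (equivToMultOf_of_mem_stabSet ha hd hγ hne.1 hne.2).elim h₁ h₂
end

section
/- For a negative integer d with d ≡ 0 or 1 (mod 4), the set of SL_2(Z)-equivalence classes of positive definite integral binary quadratic forms of discriminant d is finite. -/
/-- The set `𝒬_d` of positive definite integral binary quadratic forms `(a,b,c)` with
`a > 0` and discriminant `b² - 4ac = d`. -/
def Qd (d : ℤ) : Type :=
  {p : ℤ × ℤ × ℤ // 0 < p.1 ∧ p.2.1 ^ 2 - 4 * p.1 * p.2.2 = d}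

/-- `SL(2,ℤ)`-equivalence of forms in `𝒬_d`: `Q' = Q∘γ`, i.e. on Gram matrices
`γᵀ M γ = M'`. -/
def QdRel (d : ℤ) (Q Q' : Qd d) : Prop :=
  ∃ γ : SL2, (Matrix.transpose (γ : Matrix (Fin 2) (Fin 2) ℤ)) *
      gram Q.1.1 Q.1.2.1 Q.1.2.2 * (γ : Matrix (Fin 2) (Fin 2) ℤ)
    = gram Q'.1.1 Q'.1.2.1 Q'.1.2.2

lemma gram_transform (a b c p q r s : ℤ) :
    Matrix.transpose (!![p,q;r,s] : Matrix (Fin 2) (Fin 2) ℤ) * gram a b c * !![p,q;r,s]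
    = gram (a*p^2 + b*p*r + c*r^2) (2*a*p*q + b*(p*s+q*r) + 2*c*r*s)
        (a*q^2 + b*q*s + c*s^2) := by
  have ht : Matrix.transpose (!![p,q;r,s] : Matrix (Fin 2) (Fin 2) ℤ) = !![p,r;q,s] := by
    ext i j; fin_cases i <;> fin_cases j <;> rfl
  rw [ht]
  ext i j
  fin_cases i <;> fin_cases j <;>
    simp [gram, Matrix.mul_apply, Fin.sum_univ_two] <;> ring

lemma qdrel_of (d : ℤ) (Q Q' : Qd d) (p q r s : ℤ) (hdet : p * s - q * r = 1)
    (h1 : Q'.1.1 = Q.1.1*p^2 + Q.1.2.1*p*r + Q.1.2.2*r^2)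
    (h2 : Q'.1.2.1 = 2*Q.1.1*p*q + Q.1.2.1*(p*s+q*r) + 2*Q.1.2.2*r*s)
    (h3 : Q'.1.2.2 = Q.1.1*q^2 + Q.1.2.1*q*s + Q.1.2.2*s^2) : QdRel d Q Q' := by
  refine ⟨⟨!![p,q;r,s], by simp [Matrix.det_fin_two_of, hdet]⟩, ?_⟩
  show Matrix.transpose (!![p,q;r,s] : Matrix (Fin 2) (Fin 2) ℤ) * _ * _ = _
  rw [gram_transform, h1, h2, h3]

lemma qdrel_trans (d : ℤ) {Q Q' Q'' : Qd d} (h : QdRel d Q Q') (h' : QdRel d Q' Q'') :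
    QdRel d Q Q'' := by
  obtain ⟨γ, hγ⟩ := h
  obtain ⟨δ, hδ⟩ := h'
  refine ⟨γ * δ, ?_⟩
  rw [Matrix.SpecialLinearGroup.coe_mul, Matrix.transpose_mul]
  rw [← hδ, ← hγ]; noncomm_ring

def Reduced (d : ℤ) (Q : Qd d) : Prop :=
  -Q.1.1 ≤ Q.1.2.1 ∧ Q.1.2.1 ≤ Q.1.1 ∧ Q.1.1 ≤ Q.1.2.2

lemma reduce (d : ℤ) (hd : d < 0) :
    ∀ n : ℕ, ∀ Q : Qd d, Q.1.1.toNat ≤ n → ∃ Q', Reduced d Q' ∧ QdRel d Q Q' := by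
  intro n
  induction n with
  | zero => intro Q hQ; exact absurd hQ (by have := Q.2.1; omega)
  | succ n ih =>
    intro Q hQ
    obtain ⟨⟨a, b, c⟩, ha, hdisc⟩ := Q
    simp only at ha hdisc hQ ⊢
    set k := (b + a) / (2*a) with hk
    have hmod : (b + a) % (2*a) = b + a - 2*a*k := by rw [hk, Int.emod_def]
    have hr1 : 0 ≤ (b + a) % (2*a) := by apply Int.emod_nonneg; omega
    have hr2 : (b + a) % (2*a) < 2*a := Int.emod_lt_of_pos _ (by omega)
    have hb'1 : -a ≤ b - 2*a*k := by linarith [hmod, hr1]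
    have hb'2 : b - 2*a*k < a := by linarith [hmod, hr2]
    have hdisc' : (b - 2*a*k)^2 - 4*a*(a*k^2 - b*k + c) = d := by linear_combination hdisc
    have hrel1 : QdRel d ⟨(a, b, c), ha, hdisc⟩
        ⟨(a, b - 2*a*k, a*k^2 - b*k + c), ha, hdisc'⟩ :=
      qdrel_of d _ _ 1 (-k) 0 1 (by ring) (show a = _ by ring)
        (show b - 2*a*k = _ by ring) (show a*k^2 - b*k + c = _ by ring)
    by_cases hca : a ≤ a*k^2 - b*k + c
    · exact ⟨_, ⟨hb'1, le_of_lt hb'2, hca⟩, hrel1⟩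
    · push_neg at hca
      have hc'pos : 0 < a*k^2 - b*k + c := by nlinarith [sq_nonneg (b - 2*a*k)]
      have hdisc'' : (-(b - 2*a*k))^2 - 4*(a*k^2 - b*k + c)*a = d := by
        linear_combination hdisc'
      have hrel2 : QdRel d ⟨(a, b - 2*a*k, a*k^2 - b*k + c), ha, hdisc'⟩
          ⟨(a*k^2 - b*k + c, -(b - 2*a*k), a), hc'pos, hdisc''⟩ :=
        qdrel_of d _ _ 0 (-1) 1 0 (by ring) (show a*k^2 - b*k + c = _ by ring)
          (show -(b - 2*a*k) = _ by ring) (show a = _ by ring)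
      obtain ⟨Q', hred, hrel3⟩ := ih ⟨(a*k^2 - b*k + c, -(b - 2*a*k), a), hc'pos, hdisc''⟩
        (show (a*k^2 - b*k + c).toNat ≤ n by omega)
      exact ⟨Q', hred, qdrel_trans d (qdrel_trans d hrel1 hrel2) hrel3⟩

/-- For a negative discriminant `d ≡ 0, 1 (mod 4)`, the set of `SL(2,ℤ)`-equivalence
classes of positive definite forms of discriminant `d` is finite. -/
theorem stmt1 (d : ℤ) (hd : d < 0) (h4 : d % 4 = 0 ∨ d % 4 = 1) :
    Finite (Quot (QdRel d)) := by
  have hbound : ∀ Q : Qd d, Reduced d Q →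
      (Q.1.1, Q.1.2.1) ∈ Set.Icc d (-d) ×ˢ Set.Icc d (-d) := by
    rintro ⟨⟨a, b, c⟩, ha, hdisc⟩ ⟨h1, h2, h3⟩
    simp only at *
    have h3a : 3*a^2 ≤ -d := by nlinarith
    have haa : a ≤ -d := by nlinarith
    refine ⟨⟨by omega, by omega⟩, ⟨by omega, by omega⟩⟩
  haveI : Finite ↥(Set.Icc d (-d) ×ˢ Set.Icc d (-d)) :=
    ((Set.finite_Icc d (-d)).prod (Set.finite_Icc d (-d))).to_subtype
  haveI : Finite {Q : Qd d // Reduced d Q} := by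
    apply Finite.of_injective
      (fun Q : {Q : Qd d // Reduced d Q} =>
        (⟨(Q.1.1.1, Q.1.1.2.1), hbound Q.1 Q.2⟩ : ↥(Set.Icc d (-d) ×ˢ Set.Icc d (-d))))
    rintro ⟨⟨⟨a, b, c⟩, ha, hdisc⟩, hr⟩ ⟨⟨⟨a', b', c'⟩, ha', hdisc'⟩, hr'⟩ h
    simp only [Subtype.mk.injEq, Prod.mk.injEq] at h ⊢
    obtain ⟨rfl, rfl⟩ := h
    have hcc : c = c' := by nlinarith
    simp [hcc]
  apply Finite.of_surjective
    (fun Q : {Q : Qd d // Reduced d Q} => Quot.mk (QdRel d) Q.1)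
  intro x
  induction x using Quot.ind with
  | _ Q =>
    obtain ⟨Q', hred, hrel⟩ := reduce d hd Q.1.1.toNat Q le_rfl
    exact ⟨⟨Q', hred⟩, (Quot.sound hrel).symm⟩
end
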